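/- arXiv:1408.5328 — 3 statements merged into one kernel-verified Lean document; each statement's English description precedes it below -/
import Mathlib

section
/- The entropy variance of the geometric distribution p(n) = (1/(N+1))(N/(N+1))^n, i.e., Var(−log p(n)), equals v(N) := N(N+1)[log(N+1) − log N]². -/
/-! Under the geometric distribution of mean `N`, the information content
`-log p n = log (N + 1) + n (log (N + 1) - log N)` is an affine function of `n`. Its variance is
therefore `(log (N + 1) - log N) ^ 2` times the variance `N (N + 1)` of the distribution, which
follows from the first two moments `∑ n r ^ n` and `∑ n ^ 2 r ^ n` of the geometric series. -/

open Real

section AffineMoments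

variable {ι α : Type*} [CommRing α] [TopologicalSpace α] [IsTopologicalRing α]
  {p f : ι → α} {m s : α}

theorem hasSum_mul_affine (h0 : HasSum p 1) (h1 : HasSum (fun i ↦ f i * p i) m) (a b : α) :
    HasSum (fun i ↦ p i * (a + b * f i)) (a + b * m) := by
  convert! (h0.mul_left a).add (h1.mul_left b) using 1
  · funext i; ring
  · ring

theorem hasSum_mul_affine_sub_sq (h0 : HasSum p 1) (h1 : HasSum (fun i ↦ f i * p i) m)
    (h2 : HasSum (fun i ↦ f i ^ 2 * p i) s) (a b : α) :
    HasSum (fun i ↦ p i * (a + b * f i - (a + b * m)) ^ 2) (b ^ 2 * (s - m ^ 2)) := by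
  convert! ((h2.mul_left (b ^ 2)).sub (h1.mul_left (2 * m * b ^ 2))).add
    (h0.mul_left (m ^ 2 * b ^ 2)) using 1
  · funext i; ring
  · ring

end AffineMoments

theorem Nat.choose_two_add_two_mul_two (n : ℕ) : (n + 2).choose 2 * 2 = n ^ 2 + 3 * n + 2 := by
  induction n with
  | zero => rfl
  | succ n ih =>
    rw [Nat.choose_succ_succ, Nat.choose_one_right, add_mul, ih]
    ring

section GeometricMoments

variable {𝕜 : Type*} [NormedField 𝕜] {r : 𝕜}

theorem hasSum_sq_mul_geometric_of_norm_lt_one (hr : ‖r‖ < 1) :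
    HasSum (fun n : ℕ ↦ (n : 𝕜) ^ 2 * r ^ n) (r * (1 + r) / (1 - r) ^ 3) := by
  have hr1 : 1 - r ≠ 0 := (isUnit_one_sub_of_norm_lt_one hr).ne_zero
  convert! ((hasSum_choose_mul_geometric_of_norm_lt_one 2 hr).mul_left 2).sub
    (((hasSum_coe_mul_geometric_of_norm_lt_one hr).mul_left 3).add
      ((hasSum_geometric_of_norm_lt_one hr).mul_left 2)) using 1
  · funext n
    have h := congrArg (Nat.cast : ℕ → 𝕜) (Nat.choose_two_add_two_mul_two n)
    push_cast at h
    linear_combination (r ^ n) * h.symm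
  · field_simp
    ring

theorem hasSum_geometric_pmf (hr : ‖r‖ < 1) : HasSum (fun n : ℕ ↦ (1 - r) * r ^ n) 1 := by
  have hr1 : 1 - r ≠ 0 := (isUnit_one_sub_of_norm_lt_one hr).ne_zero
  simpa [hr1] using (hasSum_geometric_of_norm_lt_one hr).mul_left (1 - r)

theorem hasSum_coe_mul_geometric_pmf (hr : ‖r‖ < 1) :
    HasSum (fun n : ℕ ↦ n * ((1 - r) * r ^ n)) (r / (1 - r)) := by
  have hr1 : 1 - r ≠ 0 := (isUnit_one_sub_of_norm_lt_one hr).ne_zero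
  convert! (hasSum_coe_mul_geometric_of_norm_lt_one hr).mul_left (1 - r) using 1
  · funext n; ring
  · field_simp

theorem hasSum_sq_mul_geometric_pmf (hr : ‖r‖ < 1) :
    HasSum (fun n : ℕ ↦ (n : 𝕜) ^ 2 * ((1 - r) * r ^ n)) (r * (1 + r) / (1 - r) ^ 2) := by
  have hr1 : 1 - r ≠ 0 := (isUnit_one_sub_of_norm_lt_one hr).ne_zero
  convert! (hasSum_sq_mul_geometric_of_norm_lt_one hr).mul_left (1 - r) using 1
  · funext n; ring
  · field_simp

end GeometricMoments

theorem neg_log_geometric {N : ℝ} (hN : 0 < N) (n : ℕ) :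
    -log (1 / (N + 1) * (N / (N + 1)) ^ n) = log (N + 1) + n * (log (N + 1) - log N) := by
  have hN1 : 0 < N + 1 := by linarith
  rw [log_mul (by positivity) (by positivity), log_pow, log_div hN.ne' hN1.ne', one_div, log_inv]
  ring

/-- The entropy variance `Var(−log p(Z))` of the geometric distribution
`p n = (1/(N+1)) * (N/(N+1))^n` equals `v(N) = N(N+1)[log(N+1) − log N]²`. -/
theorem geometric_entropy_variance (N : ℝ) (hN : 0 < N)
    (p : ℕ → ℝ) (hp : ∀ n, p n = (1 / (N + 1)) * (N / (N + 1)) ^ n)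
    (H : ℝ) (hH : H = ∑' n : ℕ, p n * (-Real.log (p n))) :
    (∑' n : ℕ, p n * (-Real.log (p n) - H) ^ 2) =
      N * (N + 1) * (Real.log (N + 1) - Real.log N) ^ 2 := by
  set r := N / (N + 1)
  have hN1 : N + 1 ≠ 0 := by positivity
  have hr : ‖r‖ < 1 := by
    rw [norm_of_nonneg (by positivity), div_lt_one (by positivity)]
    linarith
  have hp_eq : p = fun n : ℕ ↦ (1 - r) * r ^ n := by
    funext n
    rw [hp n, one_sub_div hN1, add_sub_cancel_left]
  have h0 : HasSum p 1 := hp_eq ▸ hasSum_geometric_pmf hr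
  have h1 : HasSum (fun n : ℕ ↦ n * p n) (r / (1 - r)) := hp_eq ▸ hasSum_coe_mul_geometric_pmf hr
  have h2 : HasSum (fun n : ℕ ↦ (n : ℝ) ^ 2 * p n) (r * (1 + r) / (1 - r) ^ 2) :=
    hp_eq ▸ hasSum_sq_mul_geometric_pmf hr
  set a := log (N + 1)
  set b := log (N + 1) - log N
  have hlog (n : ℕ) : -log (p n) = a + b * n := by rw [hp n, neg_log_geometric hN, mul_comm]
  simp only [hlog] at hH ⊢
  rw [hH, (hasSum_mul_affine h0 h1 a b).tsum_eq, (hasSum_mul_affine_sub_sq h0 h1 h2 a b).tsum_eq]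
  simp only [r]
  field_simp
  ring
end

section
/- For N_S > 0, the binary entropy h₂((1 − e^{−2N_S})/2) (the BPSK Holevo capacity in nats) has the expansion −N_S ln N_S + N_S + N_S² ln N_S + o(N_S² ln N_S) as N_S → 0⁺; in particular, h₂((1 − e^{−2N_S})/2) + N_S ln N_S − N_S → 0 as N_S → 0⁺. -/
/-!
Put `p = (1 - e^{-2N})/2`. Taylor expansion of `exp` gives `p = N - N² + O(N³)`, hence
`log (p / N) = O(N)` and `log (1 - p) = -p + O(N²)`. Writing `log p = log N + log (p / N)`,
`h₂ p = -N log N + N + N² log N - (p - N + N²) log N + O(N²)`, and both error terms are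
`o(N² log N)` because `|log N| → ∞`.
-/

open Filter Asymptotics

noncomputable def h₂ (x : ℝ) : ℝ := -x * Real.log x - (1 - x) * Real.log (1 - x)

open Real Topology

theorem Real.log_one_add_sub_self_isBigO :
    (fun x : ℝ => log (1 + x) - x) =O[𝓝 0] (· ^ 2) := by
  refine isBigO_iff.2 ⟨2, ?_⟩
  filter_upwards [Metric.ball_mem_nhds (0 : ℝ) (show (0 : ℝ) < 1 / 2 by norm_num)] with x hx
  rw [Metric.mem_ball, dist_zero_right, Real.norm_eq_abs] at hx
  have h := abs_log_sub_add_sum_range_le (x := -x) (by rw [abs_neg]; linarith) 1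
  simp only [Finset.sum_range_one, zero_add, pow_one, Nat.cast_zero, div_one, abs_neg,
    sub_neg_eq_add, neg_add_eq_sub] at h
  rw [Real.norm_eq_abs, norm_pow, Real.norm_eq_abs]
  calc |log (1 + x) - x| ≤ |x| ^ 2 / (1 - |x|) := h
    _ ≤ 2 * |x| ^ 2 := by
      rw [div_le_iff₀ (by linarith)]; nlinarith [sq_nonneg |x|]

noncomputable def bpskCrossover (N : ℝ) : ℝ := (1 - exp (-2 * N)) / 2

lemma bpskCrossover_pos {N : ℝ} (hN : 0 < N) : 0 < bpskCrossover N := by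
  have : exp (-2 * N) < 1 := exp_lt_one_iff.2 (by linarith)
  unfold bpskCrossover; linarith

lemma bpskCrossover_sub_add_sq_isBigO :
    (fun N => bpskCrossover N - N + N ^ 2) =O[𝓝 0] (· ^ 3) := by
  have h := (exp_sub_sum_range_isBigO_pow 3).comp_tendsto
    (show Tendsto (fun N : ℝ => -2 * N) (𝓝 0) (𝓝 0) by
      simpa using (continuous_const_mul (-2 : ℝ)).tendsto 0)
  refine ((h.const_mul_left (-1/2)).trans (isBigO_of_le' (c := 8) _ fun N => ?_)).congr_left
    fun N => ?_
  · simp only [Function.comp_apply, norm_pow, norm_mul, norm_neg, norm_ofNat, mul_pow]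
    norm_num
  · simp [bpskCrossover, Finset.sum_range_succ]; ring

lemma tendsto_bpskCrossover : Tendsto bpskCrossover (𝓝 0) (𝓝 0) := by
  have : Continuous bpskCrossover := by unfold bpskCrossover; fun_prop
  simpa [bpskCrossover] using this.tendsto 0

lemma bpskCrossover_sub_self_isBigO :
    (fun N => bpskCrossover N - N) =O[𝓝 0] (· ^ 2) := by
  refine (bpskCrossover_sub_add_sq_isBigO.trans
    (isLittleO_pow_pow (by norm_num : 2 < 3)).isBigO).sub (isBigO_refl _ _) |>.congr_left
    fun N => ?_
  ring

lemma bpskCrossover_isBigO : bpskCrossover =O[𝓝 0] id := by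
  refine (bpskCrossover_sub_self_isBigO.trans (isLittleO_pow_id one_lt_two).isBigO).add
    (isBigO_refl id _) |>.congr_left fun N => ?_
  simp

lemma log_bpskCrossover_div_isBigO :
    (fun N => log (bpskCrossover N / N)) =O[𝓝[>] 0] id := by
  have hu : (fun N => bpskCrossover N / N - 1) =O[𝓝[>] 0] id := by
    refine ((bpskCrossover_sub_self_isBigO.mono nhdsWithin_le_nhds).mul
      (isBigO_refl (fun N : ℝ => N⁻¹) _)).congr' ?_ (Eventually.of_forall fun N => ?_)
    · filter_upwards [self_mem_nhdsWithin] with N (hN : 0 < N)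
      field_simp
    · show N ^ 2 * N⁻¹ = N
      rw [sq, mul_self_mul_inv]
  have h1 : Tendsto (fun N => bpskCrossover N / N) (𝓝[>] 0) (𝓝 1) :=
    tendsto_sub_nhds_zero_iff.1 <| hu.trans_tendsto <| tendsto_id.mono_left nhdsWithin_le_nhds
  exact ((hasDerivAt_log one_ne_zero).isBigO_sub.comp_tendsto h1).trans hu |>.congr_left
    fun N => by simp

lemma log_one_sub_bpskCrossover_add_isBigO :
    (fun N => log (1 - bpskCrossover N) + bpskCrossover N) =O[𝓝 0] (· ^ 2) := by
  have h := log_one_add_sub_self_isBigO.comp_tendsto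
    (neg_zero (G := ℝ) ▸ tendsto_bpskCrossover.neg)
  refine (h.trans ((bpskCrossover_isBigO.pow 2).congr_left fun N => ?_)).congr_left fun N => ?_
  · simp
  · simp [sub_eq_add_neg]

lemma h₂_bpskCrossover_remainder_isBigO :
    (fun N => h₂ (bpskCrossover N) - (-(N * log N) + N + N ^ 2 * log N)
      + (bpskCrossover N - N + N ^ 2) * log N) =O[𝓝[>] 0] (· ^ 2) := by
  have hp : bpskCrossover =O[𝓝[>] 0] id := bpskCrossover_isBigO.mono nhdsWithin_le_nhds
  have hRatio : (fun N => bpskCrossover N * log (bpskCrossover N / N)) =O[𝓝[>] 0] (· ^ 2) :=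
    (hp.mul log_bpskCrossover_div_isBigO).congr_right fun N => (sq N).symm
  have hOneSub : (fun N => (1 - bpskCrossover N) * (log (1 - bpskCrossover N) + bpskCrossover N))
      =O[𝓝[>] 0] (· ^ 2) := by
    have h1 : Tendsto (fun N => 1 - bpskCrossover N) (𝓝[>] 0) (𝓝 1) := by
      simpa using (tendsto_const_nhds.sub tendsto_bpskCrossover).mono_left nhdsWithin_le_nhds
    exact (h1.isBigO_one ℝ).mul (log_one_sub_bpskCrossover_add_isBigO.mono nhdsWithin_le_nhds)
      |>.congr_right fun N => one_mul _
  have hLin : (fun N => bpskCrossover N - N) =O[𝓝[>] 0] (· ^ 2) :=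
    bpskCrossover_sub_self_isBigO.mono nhdsWithin_le_nhds
  have hSq : (fun N => bpskCrossover N ^ 2) =O[𝓝[>] 0] (· ^ 2) := hp.pow 2
  refine (((hRatio.add hOneSub).sub hLin).add hSq).neg_left.congr' ?_ EventuallyEq.rfl
  filter_upwards [self_mem_nhdsWithin] with N (hN : 0 < N)
  rw [log_div (bpskCrossover_pos hN).ne' hN.ne', h₂]
  ring

lemma isLittleO_pow_pow_mul_log (n : ℕ) :
    (fun N : ℝ => N ^ n) =o[𝓝[>] 0] (fun N => N ^ n * log N) := by
  have h : (fun _ => (1 : ℝ)) =o[𝓝[>] 0] log :=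
    (isLittleO_one_left_iff ℝ).2 (tendsto_abs_atBot_atTop.comp tendsto_log_nhdsGT_zero)
  exact ((isBigO_refl (· ^ n) _).mul_isLittleO h).congr_left fun N => mul_one _

lemma isLittleO_pow_succ_mul_log_pow_mul_log (n : ℕ) :
    (fun N : ℝ => N ^ (n + 1) * log N) =o[𝓝[>] 0] (fun N => N ^ n * log N) := by
  have h : (fun N : ℝ => N) =o[𝓝[>] 0] (fun _ => (1 : ℝ)) :=
    (isLittleO_one_iff ℝ).2 (tendsto_id.mono_left nhdsWithin_le_nhds)
  exact (h.mul_isBigO (isBigO_refl (fun N => N ^ n * log N) _)).congr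
    (fun N => by ring) fun N => one_mul _

lemma tendsto_sq_mul_log_nhds_zero : Tendsto (fun N : ℝ => N ^ 2 * log N) (𝓝 0) (𝓝 0) := by
  have h : Continuous fun N : ℝ => N * (N * log N) := continuous_id.mul continuous_mul_log
  simpa [sq, mul_assoc] using h.tendsto 0

/-- The BPSK Holevo capacity `h₂((1 − e^{−2N_S})/2)` (in nats) has expansion
`−N_S ln N_S + N_S + N_S² ln N_S + o(N_S² ln N_S)` as `N_S → 0⁺`; in particular
`h₂((1 − e^{−2N_S})/2) + N_S ln N_S − N_S → 0` as `N_S → 0⁺`. -/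
theorem bpsk_holevo_expansion :
    ((fun N : ℝ =>
        h₂ ((1 - Real.exp (-2 * N)) / 2) -
          (-(N * Real.log N) + N + N ^ 2 * Real.log N))
      =o[nhdsWithin 0 (Set.Ioi 0)] (fun N : ℝ => N ^ 2 * Real.log N)) ∧
    Tendsto (fun N : ℝ => h₂ ((1 - Real.exp (-2 * N)) / 2) + N * Real.log N - N)
      (nhdsWithin 0 (Set.Ioi 0)) (nhds 0) := by
  have hLogTerm : (fun N => (bpskCrossover N - N + N ^ 2) * log N) =O[𝓝[>] 0]
      (fun N => N ^ 3 * log N) :=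
    (bpskCrossover_sub_add_sq_isBigO.mono nhdsWithin_le_nhds).mul (isBigO_refl log _)
  have hLittleO : (fun N => h₂ (bpskCrossover N) - (-(N * log N) + N + N ^ 2 * log N))
      =o[𝓝[>] 0] (fun N => N ^ 2 * log N) :=
    ((h₂_bpskCrossover_remainder_isBigO.trans_isLittleO (isLittleO_pow_pow_mul_log 2)).sub
      (hLogTerm.trans_isLittleO (isLittleO_pow_succ_mul_log_pow_mul_log 2))).congr_left
      fun N => by ring
  have hsq : Tendsto (fun N => N ^ 2 * log N) (𝓝[>] 0) (𝓝 0) :=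
    tendsto_sq_mul_log_nhds_zero.mono_left nhdsWithin_le_nhds
  refine ⟨hLittleO, ?_⟩
  have h := (hLittleO.trans_tendsto hsq).add hsq
  rw [add_zero] at h
  exact h.congr fun N => by rw [bpskCrossover]; ring
end

section
/- Hayashi–Nagaoka operator inequality: for operators 0 ≤ S ≤ I and T ≥ 0 on a Hilbert space, and any c > 0, I − (S+T)^{−1/2} S (S+T)^{−1/2} ≤ (1+c)(I − S) + (2 + c + c^{−1}) T, where the inverse is taken on the support of S+T. -/
/-!
Put `M = S + T`, `P = R² M` and `V = R M`. The hypotheses make `P` the support projection of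
`M`, so `S P = S` and `T P = T`, and `V = √M`. Since `S² ≤ S ≤ M = V²` and the square root is
operator monotone, `S ≤ V`. The inequality then follows from the identity
`(1+c)(1-S) + (2+c+c⁻¹)T - (1-RSR)`
`  = c(1-P) + 2(1+c)(V-S) + (1+c)(R-P)S(R-P) + c(R-(1+c⁻¹)P)T(R-(1+c⁻¹)P)`,
whose right-hand side is a sum of positive terms.
-/

open scoped ComplexOrder

lemma isStarProjection_mul_self_mul {A : Type*} [Ring A] [StarRing A] {R M : A}
    (hR : IsSelfAdjoint R) (hM : IsSelfAdjoint M) (hcomm : Commute R M)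
    (hinv : R * R * M * M = M) : IsStarProjection (R * R * M) := by
  have hRRM : Commute (R * R) M := hcomm.mul_left hcomm
  refine ⟨?_, ?_⟩
  · show R * R * M * (R * R * M) = R * R * M
    rw [mul_assoc (R * R) M, ← mul_assoc M, ← hRRM.eq, hinv]
  · exact ((hR.star_eq ▸ IsSelfAdjoint.star_mul_self R).commute_iff hM).mp hRRM

section Decomposition

variable {A : Type*} [Ring A] [Algebra ℝ A]

lemma sub_smul_mul_mul_sub_smul {S P : A} (R : A) (k : ℝ) (hSP : S * P = S) (hPS : P * S = S) :
    (R - k • P) * S * (R - k • P) = R * S * R - k • (R * S + S * R) + (k * k) • S := by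
  simp only [sub_mul, mul_sub, smul_mul_assoc, mul_smul_comm, smul_sub, smul_smul, hPS,
    mul_assoc, hSP]
  module

lemma hayashi_nagaoka_decomposition {S T R P : A} {c : ℝ} (hc : c ≠ 0)
    (hcomm : Commute R (S + T)) (hP : R * R * (S + T) = P)
    (hSP : S * P = S) (hPS : P * S = S) (hTP : T * P = T) (hPT : P * T = T) :
    (1 + c) • (1 - S) + (2 + c + c⁻¹) • T - (1 - R * S * R) =
      c • (1 - P) + (2 + 2 * c) • (R * (S + T) - S) + (1 + c) • ((R - P) * S * (R - P)) +
        c • ((R - (1 + c⁻¹) • P) * T * (R - (1 + c⁻¹) • P)) := by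
  have hTR : T * R = R * S + R * T - S * R := by
    have h := hcomm.eq
    rw [mul_add, add_mul] at h
    rw [h]
    abel
  have hRTR : R * T * R = P - R * S * R := by
    rw [← hP, mul_assoc R R, hcomm.eq, ← mul_assoc, mul_add, add_mul]
    abel
  have hRSR := sub_smul_mul_mul_sub_smul R 1 hSP hPS
  rw [one_smul] at hRSR
  rw [hRSR, sub_smul_mul_mul_sub_smul R _ hTP hPT, hRTR, hTR, mul_add]
  match_scalars <;> field_simp <;> ring

end Decomposition

section CStarAlgebra

variable {A : Type*} [CStarAlgebra A] [PartialOrder A] [StarOrderedRing A]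

lemma le_of_mul_self_le_mul_self {a b : A} (ha : 0 ≤ a) (hb : 0 ≤ b) (h : a * a ≤ b * b) :
    a ≤ b := by
  simpa only [CFC.sqrt_mul_self a ha, CFC.sqrt_mul_self b hb] using CFC.sqrt_le_sqrt _ _ h

lemma mul_self_le_self {a : A} (ha₀ : 0 ≤ a) (ha₁ : a ≤ 1) : a * a ≤ a := by
  have h := Commute.mul_nonneg ha₀ (sub_nonneg.mpr ha₁)
    ((Commute.one_right a).sub_right (Commute.refl a))
  rwa [mul_sub, mul_one, sub_nonneg] at h

lemma mul_eq_zero_of_le_of_mul_eq_zero {a b x : A} (ha : 0 ≤ a) (hab : a ≤ b)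
    (hbx : b * x = 0) : a * x = 0 := by
  have hxax : star x * a * x = 0 := by
    refine le_antisymm ?_ (star_left_conjugate_nonneg ha x)
    simpa only [mul_assoc, hbx, mul_zero] using star_left_conjugate_le_conjugate hab x
  obtain ⟨s, rfl⟩ := CStarAlgebra.nonneg_iff_eq_star_mul_self.mp ha
  have hsx : s * x = 0 := by
    rw [← CStarRing.star_mul_self_eq_zero_iff, ← hxax, star_mul]
    noncomm_ring
  rw [mul_assoc, hsx, mul_zero]

lemma mul_eq_self_of_le {a b p : A} (ha : 0 ≤ a) (hab : a ≤ b) (hp : IsStarProjection p)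
    (hbp : b * p = b) : a * p = a ∧ p * a = a := by
  have hap : a * (1 - p) = 0 :=
    mul_eq_zero_of_le_of_mul_eq_zero ha hab (by rw [mul_sub, mul_one, hbp, sub_self])
  rw [mul_sub, mul_one, sub_eq_zero] at hap
  refine ⟨hap.symm, ?_⟩
  simpa only [star_mul, ha.isSelfAdjoint.star_eq, hp.isSelfAdjoint.star_eq] using
    congrArg star hap.symm

theorem hayashi_nagaoka_le {S T R : A} {c : ℝ} (hc : 0 < c) (hS : 0 ≤ S) (hS₁ : S ≤ 1)
    (hT : 0 ≤ T) (hR : 0 ≤ R) (hcomm : Commute R (S + T))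
    (hinv : R * R * (S + T) * (S + T) = S + T) :
    1 - R * S * R ≤ (1 + c) • (1 - S) + (2 + c + c⁻¹) • T := by
  have hM : 0 ≤ S + T := add_nonneg hS hT
  have hP := isStarProjection_mul_self_mul hR.isSelfAdjoint hM.isSelfAdjoint hcomm hinv
  have hMP : (S + T) * (R * R * (S + T)) = S + T := by
    rw [← mul_assoc, ← (hcomm.mul_left hcomm).eq, hinv]
  obtain ⟨hSP, hPS⟩ := mul_eq_self_of_le hS (le_add_of_nonneg_right hT) hP hMP
  obtain ⟨hTP, hPT⟩ := mul_eq_self_of_le hT (le_add_of_nonneg_left hS) hP hMP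
  have hSV : S ≤ R * (S + T) := by
    refine le_of_mul_self_le_mul_self hS (hcomm.mul_nonneg hR hM) ?_
    calc S * S ≤ S := mul_self_le_self hS hS₁
      _ ≤ S + T := le_add_of_nonneg_right hT
      _ = R * (S + T) * (R * (S + T)) := by
        rw [mul_assoc, ← mul_assoc (S + T), ← hcomm.eq, ← mul_assoc, ← mul_assoc, hinv]
  rw [← sub_nonneg, hayashi_nagaoka_decomposition hc.ne' hcomm rfl hSP hPS hTP hPT]
  refine add_nonneg (add_nonneg (add_nonneg ?_ ?_) ?_) ?_
  · exact smul_nonneg hc.le hP.one_sub.nonneg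
  · exact smul_nonneg (by positivity) (sub_nonneg.mpr hSV)
  · exact smul_nonneg (by positivity)
      ((hR.isSelfAdjoint.sub hP.isSelfAdjoint).conjugate_nonneg hS)
  · exact smul_nonneg hc.le ((hR.isSelfAdjoint.sub
      ((IsSelfAdjoint.all (1 + c⁻¹ : ℝ)).smul hP.isSelfAdjoint)).conjugate_nonneg hT)

end CStarAlgebra

theorem hayashi_nagaoka_general {n : Type*} [Fintype n] [DecidableEq n]
    (S T R : Matrix n n ℂ) (c : ℝ) (hc : 0 < c)
    (hS : S.PosSemidef) (hS1 : (1 - S).PosSemidef) (hT : T.PosSemidef)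
    (hR : R.PosSemidef)
    (hcomm : R * (S + T) = (S + T) * R)
    (hinv : R * R * (S + T) * (S + T) = S + T) :
    ((1 + c : ℂ) • (1 - S) + ((2 + c + c⁻¹ : ℝ) : ℂ) • T -
      (1 - R * S * R)).PosSemidef := by
  open scoped MatrixOrder Matrix.Norms.L2Operator in
  have h := hayashi_nagaoka_le hc hS.nonneg (Matrix.le_iff.mpr hS1) hT.nonneg hR.nonneg hcomm hinv
  simp only [RCLike.real_smul_eq_coe_smul (K := ℂ)] at h
  rw [← Complex.ofReal_one, ← Complex.ofReal_add, ← Matrix.le_iff]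
  exact h

/-- **Hayashi–Nagaoka operator inequality.** Let `0 ≤ S ≤ I` and `T ≥ 0` be
operators, and let `R = (S+T)^{−1/2}` be the Moore–Penrose (generalized)
inverse square root of `S + T` (characterized by: `R` is positive
semidefinite, commutes with `S + T`, `R² (S+T)² = S+T`, and `R` vanishes on
the kernel of `S + T`).  Then for any `c > 0`,
`I − R S R ≤ (1+c)(I − S) + (2 + c + c⁻¹) T`. -/
theorem hayashi_nagaoka {n : Type*} [Fintype n] [DecidableEq n]
    (S T R : Matrix n n ℂ) (c : ℝ) (hc : 0 < c)
    (hS : S.PosSemidef) (hS1 : (1 - S).PosSemidef) (hT : T.PosSemidef)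
    (hR : R.PosSemidef)
    (hcomm : R * (S + T) = (S + T) * R)
    (hinv : R * R * (S + T) * (S + T) = S + T)
    (hker : ∀ v : n → ℂ, (S + T).mulVec v = 0 → R.mulVec v = 0) :
    ((1 + c : ℂ) • (1 - S) + ((2 + c + c⁻¹ : ℝ) : ℂ) • T -
      (1 - R * S * R)).PosSemidef :=
  hayashi_nagaoka_general S T R c hc hS hS1 hT hR hcomm hinv
end
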